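/- For x ∈ G let |x|_σ := 1/σ(n−1) − 1 where n := min{ k ≥ 0 : x ∈ G_k } (so |e|_σ = 0 since σ(−1) = 1), and for α > 0 and n ≥ 1 define the mean α-displacement M_X(α, n) := Σ_{y∈G} (|y|_σ)^α · μ^{*n}(y) ∈ [0,∞]. Then: (1) for every fixed n ≥ 1 and α > 0, M_X(α, n) < ∞ if and only if α < 1; (2) if moreover Condition (A) holds (there exists λ > 0 with c_k ≤ λ·σ(k) for all k ≥ 0), then there exist constants a₁, a₂ > 0 such that for all n ≥ 1 and all 0 < α < 1, a₁ · n^α/(1−α) ≤ M_X(α, n) ≤ a₂ · n^α/(1−α). -/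

import Mathlib

open scoped BigOperators Classical

/-- Convolution of two real-valued functions on a group:
`(f * g)(x) = ∑_y f(y) g(y⁻¹ x)`. -/
noncomputable def gconv {G : Type*} [Group G] (f g : G → ℝ) : G → ℝ :=
  fun x => ∑' y : G, f y * g (y⁻¹ * x)

/-- `n`-fold convolution power, with `f^{*0} = δ_e` and `f^{*(n+1)} = f * f^{*n}`
(so `f^{*1} = f`). -/
noncomputable def gconvPow {G : Type*} [Group G] (f : G → ℝ) : ℕ → G → ℝ
  | 0 => fun x => if x = 1 then 1 else 0
  | n + 1 => gconv f (gconvPow f n)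

/-!
Write `τ k = ∑_{i ≥ k} c i`, so that `|x|_σ = 1 / τ k - 1` for `x` of level `k`. Uniform
densities on nested subgroups convolve to the uniform density of the larger one, hence
`μ^{*n} = ∑_k p_n(k) m_k` where `p_n(k)` is the probability that the maximum of `n` independent
`c`-distributed indices is `k`. At least half of `G_k` lies outside `G_{k-1}`, so `M_X(α, n)` is
within a factor `2` of `∑_k p_n(k) (1 / τ k - 1)^α`.

Let `K` be the first level with `τ K ≤ 1 / n`. Below `K` the weights `p_n(k)` sum to at most `1`
and `(1 / τ k)^α ≤ n^α`; from `K` on, `p_n(k) ≍ n c_k`, and by concavity of `t ↦ t^(1-α)` the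
sum `∑_{k ≥ K} c_k τ_k^(-α)` is at most `τ_K^(1-α) / (1 - α) ≤ n^(α-1) / (1 - α)`. Condition (A)
says `τ k ≤ (1 + λ) τ (k + 1)`, which makes the same comparison work from below. For `α ≥ 1`
the moment diverges because `∑_k c_k / τ_k = ∞` for every summable positive sequence.
-/

open Finset Filter
open scoped ENNReal Topology

lemma rpow_le_tangent_line {x y β : ℝ} (hx : 0 < x) (hy : 0 ≤ y) (hβ0 : 0 ≤ β) (hβ1 : β ≤ 1) :
    y ^ β ≤ x ^ β + β * x ^ (β - 1) * (y - x) := by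
  have hs : -1 ≤ (y - x) / x := by rw [le_div_iff₀ hx]; linarith
  have hy' : y = x * (1 + (y - x) / x) := by field_simp; ring
  calc y ^ β = x ^ β * (1 + (y - x) / x) ^ β := by
        rw [hy', Real.mul_rpow hx.le (by linarith)]; congr 2; field_simp; ring
    _ ≤ x ^ β * (1 + β * ((y - x) / x)) := by
        gcongr; exact rpow_one_add_le_one_add_mul_self hs hβ0 hβ1
    _ = x ^ β + β * x ^ (β - 1) * (y - x) := by
        rw [Real.rpow_sub_one hx.ne']; field_simp

lemma pow_sub_pow_le_mul_sub {a b : ℝ} (hb : 0 ≤ b) (hba : b ≤ a) (ha : a ≤ 1) (n : ℕ) :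
    a ^ n - b ^ n ≤ n * (a - b) := by
  have h := abs_pow_sub_pow_le a b n
  rw [abs_of_nonneg (sub_nonneg.2 (pow_le_pow_left₀ hb hba n)), abs_of_nonneg (sub_nonneg.2 hba),
    abs_of_nonneg (hb.trans hba), abs_of_nonneg hb, max_eq_left hba] at h
  calc a ^ n - b ^ n ≤ (a - b) * n * a ^ (n - 1) := h
    _ ≤ (a - b) * n * 1 := by
        gcongr
        exact pow_le_one₀ (hb.trans hba) ha
    _ = n * (a - b) := by ring

lemma mul_pow_mul_sub_le_pow_sub_pow {a b : ℝ} (hb : 0 ≤ b) (hba : b ≤ a) (n : ℕ) :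
    n * b ^ (n - 1) * (a - b) ≤ a ^ n - b ^ n := by
  rw [← geom_sum₂_mul]
  refine mul_le_mul_of_nonneg_right ?_ (sub_nonneg.2 hba)
  calc (n : ℝ) * b ^ (n - 1) = ∑ i ∈ range n, b ^ i * b ^ (n - 1 - i) := by
        rw [sum_congr rfl fun i hi => by
          rw [← pow_add, Nat.add_sub_of_le (Nat.le_sub_one_of_lt (mem_range.1 hi))]]
        simp
    _ ≤ ∑ i ∈ range n, a ^ i * b ^ (n - 1 - i) := by gcongr

lemma ENNReal.tsum_ofReal_sub_succ {f : ℕ → ℝ} (hf : Antitone f) (hlim : Tendsto f atTop (𝓝 0)) :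
    ∑' k, ENNReal.ofReal (f k - f (k + 1)) = ENNReal.ofReal (f 0) := by
  have hnonneg : ∀ k, 0 ≤ f k - f (k + 1) := fun k => sub_nonneg.2 (hf k.le_succ)
  have hsum : HasSum (fun k => f k - f (k + 1)) (f 0) := by
    rw [hasSum_iff_tendsto_nat_of_nonneg hnonneg]
    refine ((tendsto_const_nhds (x := f 0)).sub hlim).congr' ?_ |>.trans (by rw [sub_zero])
    exact Eventually.of_forall fun n => (sum_range_sub' f n).symm
  rw [← ENNReal.ofReal_tsum_of_nonneg hnonneg hsum.summable, hsum.tsum_eq]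

lemma ENNReal.summable_toReal_iff {ι : Type*} {f : ι → ℝ≥0∞} (hf : ∀ i, f i ≠ ∞) :
    Summable (fun i => (f i).toReal) ↔ ∑' i, f i ≠ ∞ := by
  refine ⟨fun h => ?_, ENNReal.summable_toReal⟩
  rw [← tsum_congr fun i => ENNReal.ofReal_toReal (hf i),
    ← ENNReal.ofReal_tsum_of_nonneg (fun i => ENNReal.toReal_nonneg) h]
  exact ENNReal.ofReal_ne_top

noncomputable def tail (c : ℕ → ℝ) (k : ℕ) : ℝ := ∑' i, c (i + k)

section Tail

variable {c : ℕ → ℝ} {α : ℝ}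

lemma tail_shift (K k : ℕ) : tail (fun i => c (i + K)) k = tail c (k + K) := by
  simp only [tail, add_assoc]

lemma tendsto_tail : Tendsto (tail c) atTop (𝓝 0) := tendsto_sum_nat_add c

lemma tendsto_tail_rpow (hα : α < 1) : Tendsto (fun k => tail c k ^ (1 - α)) atTop (𝓝 0) := by
  simpa [Real.zero_rpow (by linarith : 1 - α ≠ 0)] using
    tendsto_tail.rpow_const (Or.inr (by linarith : 0 ≤ 1 - α))

lemma sum_range_add_tail (hs : Summable c) (k : ℕ) :
    ∑ i ∈ range k, c i + tail c k = ∑' i, c i :=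
  hs.sum_add_tsum_nat_add k

lemma tail_eq_add_tail_succ (hs : Summable c) (k : ℕ) : tail c k = c k + tail c (k + 1) := by
  have := sum_range_add_tail hs (k + 1)
  rw [sum_range_succ, ← sum_range_add_tail hs k] at this
  linarith

variable (hc : ∀ k, 0 < c k) (hs : Summable c)
include hc hs

lemma tail_pos (k : ℕ) : 0 < tail c k :=
  ((summable_nat_add_iff k).2 hs).tsum_pos (fun _ => (hc _).le) 0 (hc _)

lemma tail_strictAnti : StrictAnti (tail c) :=
  strictAnti_nat_of_succ_lt fun k => by linarith [tail_eq_add_tail_succ hs k, hc k]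

lemma one_le_of_tail_le_mul_tail_succ {ρ : ℝ} (hρ : ∀ k, tail c k ≤ ρ * tail c (k + 1)) :
    1 ≤ ρ := by
  by_contra! h
  nlinarith [hρ 0, tail_strictAnti hc hs (Nat.lt_succ_self 0), tail_pos hc hs 1]

-- Each tail of the series carries mass `≥ 1`, since `tail c (k + K) ≤ tail c K`.
lemma tsum_ofReal_div_tail_eq_top : ∑' k, ENNReal.ofReal (c k / tail c k) = ∞ := by
  by_contra hfin
  have hge : ∀ K, 1 ≤ ∑' k, ENNReal.ofReal (c (k + K) / tail c (k + K)) := by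
    intro K
    have htK := tail_pos hc hs K
    calc (1 : ℝ≥0∞) = ENNReal.ofReal (∑' k, c (k + K) / tail c K) := by
          rw [tsum_div_const, ← tail, div_self htK.ne', ENNReal.ofReal_one]
      _ = ∑' k, ENNReal.ofReal (c (k + K) / tail c K) :=
          ENNReal.ofReal_tsum_of_nonneg (fun k => div_nonneg (hc _).le htK.le)
            (((summable_nat_add_iff K).2 hs).div_const _)
      _ ≤ ∑' k, ENNReal.ofReal (c (k + K) / tail c (k + K)) :=
          ENNReal.tsum_le_tsum fun k => ENNReal.ofReal_le_ofReal <|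
            div_le_div_of_nonneg_left (hc _).le (tail_pos hc hs _)
              ((tail_strictAnti hc hs).antitone (Nat.le_add_left K k))
  exact absurd (ge_of_tendsto' (ENNReal.tendsto_sum_nat_add _ hfin) hge) (by norm_num)

lemma tsum_ofReal_tail_rpow_sub (hα : α < 1) (K : ℕ) :
    ∑' k, ENNReal.ofReal (tail c (k + K) ^ (1 - α) - tail c (k + K + 1) ^ (1 - α)) =
      ENNReal.ofReal (tail c K ^ (1 - α)) := by
  have h := ENNReal.tsum_ofReal_sub_succ (f := fun k => tail c (k + K) ^ (1 - α))
    (fun i j hij => Real.rpow_le_rpow (tail_pos hc hs _).le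
      ((tail_strictAnti hc hs).antitone (by omega)) (by linarith))
    ((tendsto_tail_rpow hα).comp (tendsto_add_atTop_nat K))
  simpa only [add_right_comm _ 1 K, zero_add] using h

variable (hα0 : 0 ≤ α) (hα1 : α < 1)
include hα0 hα1

lemma mul_rpow_neg_le_tail_rpow_sub (k : ℕ) :
    (1 - α) * (c k * tail c k ^ (-α)) ≤ tail c k ^ (1 - α) - tail c (k + 1) ^ (1 - α) := by
  have h := rpow_le_tangent_line (tail_pos hc hs k) (tail_pos hc hs (k + 1)).le
    (by linarith : 0 ≤ 1 - α) (by linarith : 1 - α ≤ 1)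
  rw [tail_eq_add_tail_succ hs k] at h ⊢
  rw [show 1 - α - 1 = -α by ring] at h
  linarith

lemma tail_rpow_sub_le_mul_rpow_neg (k : ℕ) :
    tail c k ^ (1 - α) - tail c (k + 1) ^ (1 - α) ≤ (1 - α) * (c k * tail c (k + 1) ^ (-α)) := by
  have h := rpow_le_tangent_line (tail_pos hc hs (k + 1)) (tail_pos hc hs k).le
    (by linarith : 0 ≤ 1 - α) (by linarith : 1 - α ≤ 1)
  rw [tail_eq_add_tail_succ hs k] at h ⊢
  rw [show 1 - α - 1 = -α by ring] at h
  linarith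

lemma tail_succ_rpow_neg_le {ρ : ℝ} (hρ : ∀ k, tail c k ≤ ρ * tail c (k + 1)) (k : ℕ) :
    tail c (k + 1) ^ (-α) ≤ ρ * tail c k ^ (-α) := by
  have hρ1 := one_le_of_tail_le_mul_tail_succ hc hs hρ
  have htk := tail_pos hc hs k
  calc tail c (k + 1) ^ (-α) ≤ (tail c k / ρ) ^ (-α) :=
        Real.rpow_le_rpow_of_nonpos (by positivity)
          (by rw [div_le_iff₀ (by linarith)]; linarith [hρ k]) (by linarith)
    _ = ρ ^ α * tail c k ^ (-α) := by
        rw [Real.div_rpow htk.le (by linarith), div_eq_mul_inv, ← Real.rpow_neg (by linarith),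
          neg_neg, mul_comm]
    _ ≤ ρ * tail c k ^ (-α) := by
        gcongr
        simpa using Real.rpow_le_rpow_of_exponent_le hρ1 hα1.le

lemma tsum_ofReal_mul_tail_rpow_neg_le (K : ℕ) :
    ∑' k, ENNReal.ofReal (c (k + K) * tail c (k + K) ^ (-α)) ≤
      ENNReal.ofReal (tail c K ^ (1 - α) / (1 - α)) := by
  rw [ENNReal.ofReal_div_of_pos (by linarith), ENNReal.le_div_iff_mul_le
    (Or.inl (by simpa using hα1)) (Or.inl ENNReal.ofReal_ne_top), mul_comm,
    ← tsum_ofReal_tail_rpow_sub hc hs hα1, ← ENNReal.tsum_mul_left]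
  refine ENNReal.tsum_le_tsum fun k => ?_
  rw [← ENNReal.ofReal_mul (by linarith)]
  exact ENNReal.ofReal_le_ofReal (mul_rpow_neg_le_tail_rpow_sub hc hs hα0 hα1 _)

lemma ofReal_tail_rpow_div_le_tsum {ρ : ℝ} (hρ : ∀ k, tail c k ≤ ρ * tail c (k + 1)) (K : ℕ) :
    ENNReal.ofReal (tail c K ^ (1 - α) / ((1 - α) * ρ)) ≤
      ∑' k, ENNReal.ofReal (c (k + K) * tail c (k + K) ^ (-α)) := by
  have hpos : 0 < (1 - α) * ρ := by nlinarith [one_le_of_tail_le_mul_tail_succ hc hs hρ]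
  rw [ENNReal.ofReal_div_of_pos hpos,
    ENNReal.div_le_iff (by simpa using hpos) ENNReal.ofReal_ne_top, mul_comm,
    ← tsum_ofReal_tail_rpow_sub hc hs hα1, ← ENNReal.tsum_mul_left]
  refine ENNReal.tsum_le_tsum fun k => ?_
  rw [← ENNReal.ofReal_mul hpos.le]
  refine ENNReal.ofReal_le_ofReal ((tail_rpow_sub_le_mul_rpow_neg hc hs hα0 hα1 _).trans ?_)
  calc (1 - α) * (c (k + K) * tail c (k + K + 1) ^ (-α))
      ≤ (1 - α) * (c (k + K) * (ρ * tail c (k + K) ^ (-α))) :=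
        mul_le_mul_of_nonneg_left (mul_le_mul_of_nonneg_left
          (tail_succ_rpow_neg_le hc hs hα0 hα1 hρ _) (hc _).le) (by linarith)
    _ = (1 - α) * ρ * (c (k + K) * tail c (k + K) ^ (-α)) := by ring

end Tail

-- The probability that the maximum of `n` independent `c`-distributed indices equals `k`.
noncomputable def maxLaw (c : ℕ → ℝ) (n k : ℕ) : ℝ :=
  (∑ i ∈ range (k + 1), c i) ^ n - (∑ i ∈ range k, c i) ^ n

-- `|x|_σ` for `x` of level `k`: `tail c k` is `σ (k - 1)`, and `tail c 0 = 1`.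
noncomputable def levelLength (c : ℕ → ℝ) (k : ℕ) : ℝ := (tail c k)⁻¹ - 1

section MaxLaw

variable {c : ℕ → ℝ}

lemma maxLaw_nonneg (hc : ∀ k, 0 ≤ c k) (n k : ℕ) : 0 ≤ maxLaw c n k := by
  rw [maxLaw, sum_range_succ, sub_nonneg]
  exact pow_le_pow_left₀ (sum_nonneg fun i _ => hc i) (le_add_of_nonneg_right (hc k)) n

lemma maxLaw_one (k : ℕ) : maxLaw c 1 k = c k := by
  simp [maxLaw, sum_range_succ]

lemma maxLaw_succ (n k : ℕ) :
    maxLaw c (n + 1) k =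
      c k * (∑ i ∈ range k, c i) ^ n + (∑ i ∈ range (k + 1), c i) * maxLaw c n k := by
  simp only [maxLaw, sum_range_succ]
  ring

lemma sum_range_maxLaw {n : ℕ} (hn : n ≠ 0) (N : ℕ) :
    ∑ k ∈ range N, maxLaw c n k = (∑ i ∈ range N, c i) ^ n := by
  unfold maxLaw
  rw [sum_range_sub (fun k => (∑ i ∈ range k, c i) ^ n), sum_range_zero, zero_pow hn, sub_zero]

lemma ofReal_maxLaw_succ (hc : ∀ k, 0 ≤ c k) {n : ℕ} (hn : n ≠ 0) (m : ℕ) :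
    ENNReal.ofReal (maxLaw c (n + 1) m) =
      ENNReal.ofReal (c m) * ∑ k ∈ range m, ENNReal.ofReal (maxLaw c n k) +
        ENNReal.ofReal (maxLaw c n m) * ∑ j ∈ range (m + 1), ENNReal.ofReal (c j) := by
  rw [← ENNReal.ofReal_sum_of_nonneg fun k _ => maxLaw_nonneg hc n k,
    ← ENNReal.ofReal_sum_of_nonneg fun j _ => hc j, sum_range_maxLaw hn,
    ← ENNReal.ofReal_mul (hc m), ← ENNReal.ofReal_mul (maxLaw_nonneg hc n m),
    ← ENNReal.ofReal_add (mul_nonneg (hc m) (pow_nonneg (sum_nonneg fun i _ => hc i) n))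
      (mul_nonneg (maxLaw_nonneg hc n m) (sum_nonneg fun i _ => hc i)), maxLaw_succ]
  ring_nf

lemma mul_pow_mul_le_maxLaw (hc : ∀ k, 0 ≤ c k) (n k : ℕ) :
    n * (∑ i ∈ range k, c i) ^ (n - 1) * c k ≤ maxLaw c n k := by
  have h := mul_pow_mul_sub_le_pow_sub_pow (sum_nonneg fun i (_ : i ∈ range k) => hc i)
    (le_add_of_nonneg_right (hc k)) n
  rwa [add_sub_cancel_left, ← sum_range_succ] at h

lemma c_zero_pow_mul_le_maxLaw (hc : ∀ k, 0 ≤ c k) {n k : ℕ} (hn : 1 ≤ n) (hk : 1 ≤ k) :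
    c 0 ^ (n - 1) * c k ≤ maxLaw c n k := by
  have hnR : (1 : ℝ) ≤ n := by exact_mod_cast hn
  have hQ : c 0 ≤ ∑ i ∈ range k, c i := single_le_sum (fun i _ => hc i) (mem_range.2 hk)
  refine le_trans ?_ (mul_pow_mul_le_maxLaw hc n k)
  refine mul_le_mul_of_nonneg_right ?_ (hc k)
  exact (pow_le_pow_left₀ (hc 0) hQ _).trans
    (le_mul_of_one_le_left (pow_nonneg ((hc 0).trans hQ) _) hnR)

end MaxLaw

section Probability

variable {c : ℕ → ℝ} {α : ℝ} (hc : ∀ k, 0 < c k) (hs : HasSum c 1)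

include hs in
lemma tail_zero_eq_one : tail c 0 = 1 := by
  simp [tail, hs.tsum_eq]

include hs in
lemma sum_range_eq_one_sub_tail (k : ℕ) : ∑ i ∈ range k, c i = 1 - tail c k := by
  linarith [sum_range_add_tail hs.summable k, hs.tsum_eq]

include hs in
lemma levelLength_zero : levelLength c 0 = 0 := by
  rw [levelLength, tail_zero_eq_one hs, inv_one, sub_self]

include hc hs

lemma tail_le_one (k : ℕ) : tail c k ≤ 1 :=
  tail_zero_eq_one hs ▸ (tail_strictAnti hc hs.summable).antitone k.zero_le

lemma levelLength_nonneg (k : ℕ) : 0 ≤ levelLength c k :=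
  sub_nonneg.2 ((one_le_inv₀ (tail_pos hc hs.summable k)).2 (tail_le_one hc hs k))

lemma monotone_levelLength : Monotone (levelLength c) := fun _ k hjk =>
  sub_le_sub_right (inv_anti₀ (tail_pos hc hs.summable k)
    ((tail_strictAnti hc hs.summable).antitone hjk)) 1

lemma levelLength_rpow_le (hα : 0 ≤ α) (k : ℕ) : levelLength c k ^ α ≤ tail c k ^ (-α) := by
  have ht := tail_pos hc hs.summable k
  rw [Real.rpow_neg ht.le, ← Real.inv_rpow ht.le]
  exact Real.rpow_le_rpow (levelLength_nonneg hc hs k) (by simp [levelLength]) hα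

lemma c_zero_div_tail_le_levelLength {k : ℕ} (hk : 1 ≤ k) : c 0 / tail c k ≤ levelLength c k := by
  have ht := tail_pos hc hs.summable k
  rw [levelLength, div_le_iff₀ ht, sub_mul, inv_mul_cancel₀ ht.ne', one_mul,
    ← sum_range_eq_one_sub_tail hs]
  exact single_le_sum (fun i _ => (hc i).le) (mem_range.2 hk)

lemma maxLaw_le_mul (n k : ℕ) : maxLaw c n k ≤ n * c k := by
  have h := pow_sub_pow_le_mul_sub (sum_nonneg fun i (_ : i ∈ range k) => (hc i).le)
    (le_add_of_nonneg_right (hc k).le)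
    (by rw [← sum_range_succ]; exact sum_le_hasSum _ (fun i _ => (hc i).le) hs) n
  rwa [add_sub_cancel_left, ← sum_range_succ] at h

-- Bernoulli: `(1 - 1 / (2n)) ^ (n - 1) ≥ 1 / 2`.
lemma mul_le_maxLaw_of_tail_le {n k : ℕ} (hn : 1 ≤ n) (hk : tail c k ≤ 1 / (2 * n)) :
    n * c k / 2 ≤ maxLaw c n k := by
  have hnR : (1 : ℝ) ≤ n := by exact_mod_cast hn
  have hq : 1 - 1 / (2 * n) ≤ ∑ i ∈ range k, c i := by
    rw [sum_range_eq_one_sub_tail hs]; linarith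
  have hhalf : (1 : ℝ) / 2 ≤ (∑ i ∈ range k, c i) ^ (n - 1) := by
    have hbern := one_add_mul_le_pow (a := -(1 / (2 * (n : ℝ))))
      (by rw [neg_le_neg_iff, div_le_iff₀ (by positivity)]; linarith) (n - 1)
    rw [Nat.cast_sub hn, Nat.cast_one, ← sub_eq_add_neg] at hbern
    calc (1 : ℝ) / 2 ≤ 1 + (n - 1) * -(1 / (2 * n)) := by
          field_simp; linarith
      _ ≤ (1 - 1 / (2 * n)) ^ (n - 1) := hbern
      _ ≤ (∑ i ∈ range k, c i) ^ (n - 1) :=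
          pow_le_pow_left₀ (by rw [sub_nonneg, div_le_one (by positivity)]; linarith) hq _
  calc n * c k / 2 = n * (1 / 2) * c k := by ring
    _ ≤ n * (∑ i ∈ range k, c i) ^ (n - 1) * c k := by gcongr; exact (hc k).le
    _ ≤ maxLaw c n k := mul_pow_mul_le_maxLaw (fun i => (hc i).le) n k

end Probability

lemma inv_natCast_rpow_one_sub {n : ℕ} (hn : 1 ≤ n) (α : ℝ) :
    (1 / (n : ℝ)) ^ (1 - α) = (n : ℝ) ^ α / n := by
  have hnR : (0 : ℝ) < n := by exact_mod_cast hn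
  rw [one_div, Real.inv_rpow hnR.le, ← Real.rpow_neg hnR.le, neg_sub, Real.rpow_sub_one hnR.ne']

lemma natCast_rpow_div_le_rpow {n : ℕ} (hn : 1 ≤ n) {α ρ x : ℝ} (hα0 : 0 ≤ α) (hα1 : α ≤ 1)
    (hρ : 1 ≤ ρ) (hx : 1 / (2 * n) / ρ ≤ x) : (n : ℝ) ^ α / n / (2 * ρ) ≤ x ^ (1 - α) := by
  have hnR : (0 : ℝ) < n := by exact_mod_cast hn
  have hρ' : 1 / (2 * ρ) ^ 1 ≤ (1 / (2 * ρ)) ^ (1 - α) := by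
    simpa using Real.rpow_le_rpow_of_exponent_ge (by positivity : 0 < 1 / (2 * ρ))
      (by rw [div_le_one (by positivity)]; linarith) (by linarith : 1 - α ≤ 1)
  calc (n : ℝ) ^ α / n / (2 * ρ) = (1 / (n : ℝ)) ^ (1 - α) * (1 / (2 * ρ)) := by
        rw [inv_natCast_rpow_one_sub hn]; ring
    _ ≤ (1 / (n : ℝ)) ^ (1 - α) * (1 / (2 * ρ)) ^ (1 - α) := by
        gcongr; simpa using hρ'
    _ = (1 / (2 * n) / ρ) ^ (1 - α) := by
        rw [← Real.mul_rpow (by positivity) (by positivity)]; congr 1; field_simp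
    _ ≤ x ^ (1 - α) := Real.rpow_le_rpow (by positivity) hx (by linarith)

noncomputable def levelMoment (c : ℕ → ℝ) (α : ℝ) (n : ℕ) : ℝ≥0∞ :=
  ∑' k, ENNReal.ofReal (maxLaw c n k) * ENNReal.ofReal (levelLength c k ^ α)

section LevelMoment

variable {c : ℕ → ℝ} {α : ℝ} {n : ℕ}

lemma exists_tail_le_forall_lt {ε : ℝ} (hε : 0 < ε) :
    ∃ K, tail c K ≤ ε ∧ ∀ k < K, ε < tail c k := by
  have hex : ∃ k, tail c k ≤ ε := (tendsto_tail.eventually_lt_const hε).exists.imp fun _ h => h.le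
  exact ⟨Nat.find hex, Nat.find_spec hex, fun k hk => not_le.1 (Nat.find_min hex hk)⟩

variable (hc : ∀ k, 0 < c k) (hs : HasSum c 1)
include hc hs

lemma mul_div_tail_le_maxLaw_mul (hn : 1 ≤ n) (hα : 1 ≤ α) {k : ℕ} (hk : 1 ≤ k) :
    c 0 ^ (n - 1) * c 0 ^ α * (c k / tail c k) ≤ maxLaw c n k * levelLength c k ^ α := by
  have ht := tail_pos hc hs.summable k
  have hc0 := hc 0
  have hlevel : c 0 ^ α / tail c k ≤ levelLength c k ^ α :=
    calc c 0 ^ α / tail c k ≤ c 0 ^ α * tail c k ^ (-α) := by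
          rw [div_eq_mul_inv, ← Real.rpow_neg_one]
          exact mul_le_mul_of_nonneg_left
            (Real.rpow_le_rpow_of_exponent_ge ht (tail_le_one hc hs _) (by linarith))
            (by positivity)
      _ = (c 0 / tail c k) ^ α := by
          rw [Real.div_rpow hc0.le ht.le, Real.rpow_neg ht.le, div_eq_mul_inv]
      _ ≤ levelLength c k ^ α := Real.rpow_le_rpow (by positivity)
          (c_zero_div_tail_le_levelLength hc hs hk) (by linarith)
  calc c 0 ^ (n - 1) * c 0 ^ α * (c k / tail c k) = c 0 ^ (n - 1) * c k * (c 0 ^ α / tail c k) := by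
        ring
    _ ≤ maxLaw c n k * levelLength c k ^ α :=
        mul_le_mul (c_zero_pow_mul_le_maxLaw (fun i => (hc i).le) hn hk) hlevel (by positivity)
          (maxLaw_nonneg (fun i => (hc i).le) n k)

lemma levelMoment_eq_top (hn : 1 ≤ n) (hα : 1 ≤ α) : levelMoment c α n = ∞ := by
  set γ := c 0 ^ (n - 1) * c 0 ^ α
  have hγ : 0 < γ := by have := hc 0; positivity
  have hdiv : ∑' k, ENNReal.ofReal (c (k + 1) / tail c (k + 1)) = ∞ := by
    simpa only [tail_shift] using tsum_ofReal_div_tail_eq_top (c := fun i => c (i + 1))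
      (fun k => hc _) ((summable_nat_add_iff 1).2 hs.summable)
  refine top_le_iff.1 ?_
  calc ∞ = ENNReal.ofReal γ * ∑' k, ENNReal.ofReal (c (k + 1) / tail c (k + 1)) := by
        rw [hdiv, ENNReal.mul_top (ENNReal.ofReal_pos.2 hγ).ne']
    _ ≤ ∑' k, ENNReal.ofReal (maxLaw c n (k + 1)) * ENNReal.ofReal (levelLength c (k + 1) ^ α) := by
        rw [← ENNReal.tsum_mul_left]
        refine ENNReal.tsum_le_tsum fun k => ?_
        rw [← ENNReal.ofReal_mul hγ.le,
          ← ENNReal.ofReal_mul (maxLaw_nonneg (fun i => (hc i).le) _ _)]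
        exact ENNReal.ofReal_le_ofReal
          (mul_div_tail_le_maxLaw_mul hc hs hn hα (Nat.le_add_left 1 k))
    _ ≤ levelMoment c α n := ENNReal.tsum_comp_le_tsum_of_injective (add_left_injective 1) _

lemma levelMoment_head_le (hn : 1 ≤ n) (hα : 0 ≤ α) {K : ℕ} (hK : ∀ k < K, 1 / n < tail c k) :
    ∑ k ∈ range K, ENNReal.ofReal (maxLaw c n k) * ENNReal.ofReal (levelLength c k ^ α) ≤
      ENNReal.ofReal (n ^ α) := by
  have hnR : (0 : ℝ) < n := by exact_mod_cast hn
  calc ∑ k ∈ range K, ENNReal.ofReal (maxLaw c n k) * ENNReal.ofReal (levelLength c k ^ α)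
      ≤ ∑ k ∈ range K, ENNReal.ofReal (maxLaw c n k) * ENNReal.ofReal (n ^ α) := by
        refine sum_le_sum fun k hk => mul_le_mul' le_rfl (ENNReal.ofReal_le_ofReal ?_)
        have ht := tail_pos hc hs.summable k
        refine (levelLength_rpow_le hc hs hα k).trans ?_
        rw [Real.rpow_neg ht.le, ← Real.inv_rpow ht.le]
        refine Real.rpow_le_rpow (by positivity) ?_ hα
        rw [inv_le_comm₀ ht hnR, ← one_div]
        exact (hK k (mem_range.1 hk)).le
    _ = ENNReal.ofReal ((∑ i ∈ range K, c i) ^ n) * ENNReal.ofReal (n ^ α) := by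
        rw [← sum_mul, ← ENNReal.ofReal_sum_of_nonneg fun k _ =>
          maxLaw_nonneg (fun i => (hc i).le) n k, sum_range_maxLaw (by omega)]
    _ ≤ ENNReal.ofReal (n ^ α) := by
        refine mul_le_of_le_one_left' (ENNReal.ofReal_le_one.2 (pow_le_one₀
          (sum_nonneg fun i _ => (hc i).le) (sum_le_hasSum _ (fun i _ => (hc i).le) hs)))

lemma levelMoment_tail_le (hn : 1 ≤ n) (hα0 : 0 ≤ α) (hα1 : α < 1) {K : ℕ}
    (hK : tail c K ≤ 1 / n) :
    ∑' k, ENNReal.ofReal (maxLaw c n (k + K)) * ENNReal.ofReal (levelLength c (k + K) ^ α) ≤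
      ENNReal.ofReal (n ^ α / (1 - α)) := by
  have hnR : (0 : ℝ) < n := by exact_mod_cast hn
  calc ∑' k, ENNReal.ofReal (maxLaw c n (k + K)) * ENNReal.ofReal (levelLength c (k + K) ^ α)
      ≤ ∑' k, ENNReal.ofReal n * ENNReal.ofReal (c (k + K) * tail c (k + K) ^ (-α)) := by
        refine ENNReal.tsum_le_tsum fun k => ?_
        rw [← ENNReal.ofReal_mul hnR.le, ← mul_assoc,
          ENNReal.ofReal_mul (mul_nonneg hnR.le (hc _).le)]
        exact mul_le_mul' (ENNReal.ofReal_le_ofReal (maxLaw_le_mul hc hs n _))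
          (ENNReal.ofReal_le_ofReal (levelLength_rpow_le hc hs hα0 _))
    _ ≤ ENNReal.ofReal n * ENNReal.ofReal (tail c K ^ (1 - α) / (1 - α)) := by
        rw [ENNReal.tsum_mul_left]
        exact mul_le_mul' le_rfl (tsum_ofReal_mul_tail_rpow_neg_le hc hs.summable hα0 hα1 K)
    _ ≤ ENNReal.ofReal (n ^ α / (1 - α)) := by
        rw [← ENNReal.ofReal_mul hnR.le, mul_div_assoc']
        refine ENNReal.ofReal_le_ofReal (div_le_div_of_nonneg_right ?_ (by linarith))
        calc n * tail c K ^ (1 - α) ≤ n * (1 / (n : ℝ)) ^ (1 - α) := by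
              gcongr; exact (tail_pos hc hs.summable K).le
          _ = n ^ α := by rw [inv_natCast_rpow_one_sub hn, mul_div_cancel₀ _ hnR.ne']

lemma levelMoment_le (hn : 1 ≤ n) (hα0 : 0 ≤ α) (hα1 : α < 1) :
    levelMoment c α n ≤ ENNReal.ofReal (2 * n ^ α / (1 - α)) := by
  have hnR : (0 : ℝ) < n := by exact_mod_cast hn
  obtain ⟨K, hK, hlt⟩ := exists_tail_le_forall_lt (c := c) (one_div_pos.2 hnR)
  calc levelMoment c α n
      = ∑ k ∈ range K, ENNReal.ofReal (maxLaw c n k) * ENNReal.ofReal (levelLength c k ^ α) +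
          ∑' k, ENNReal.ofReal (maxLaw c n (k + K)) * ENNReal.ofReal (levelLength c (k + K) ^ α) :=
        (Summable.sum_add_tsum_nat_add' ENNReal.summable).symm
    _ ≤ ENNReal.ofReal (n ^ α) + ENNReal.ofReal (n ^ α / (1 - α)) :=
        add_le_add (levelMoment_head_le hc hs hn hα0 hlt) (levelMoment_tail_le hc hs hn hα0 hα1 hK)
    _ ≤ ENNReal.ofReal (2 * n ^ α / (1 - α)) := by
        rw [← ENNReal.ofReal_add (by positivity) (div_nonneg (by positivity) (by linarith))]
        refine ENNReal.ofReal_le_ofReal ?_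
        have : (n : ℝ) ^ α ≤ n ^ α / (1 - α) :=
          le_div_self (by positivity) (by linarith) (by linarith)
        linarith [show 2 * (n : ℝ) ^ α / (1 - α) = n ^ α / (1 - α) + n ^ α / (1 - α) by ring]

lemma mul_rpow_neg_le_maxLaw_mul (hn : 1 ≤ n) (hα0 : 0 ≤ α) (hα1 : α ≤ 1) {k : ℕ} (hk : 1 ≤ k)
    (hkn : tail c k ≤ 1 / (2 * n)) :
    n * c 0 / 2 * (c k * tail c k ^ (-α)) ≤ maxLaw c n k * levelLength c k ^ α := by
  have ht := tail_pos hc hs.summable k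
  have hc0 := hc 0
  have hlevel : c 0 * tail c k ^ (-α) ≤ levelLength c k ^ α :=
    calc c 0 * tail c k ^ (-α) ≤ c 0 ^ α * tail c k ^ (-α) := by
          refine mul_le_mul_of_nonneg_right ?_ (Real.rpow_nonneg ht.le _)
          simpa using Real.rpow_le_rpow_of_exponent_ge hc0 (le_hasSum hs 0 fun j _ => (hc j).le) hα1
      _ = (c 0 / tail c k) ^ α := by
          rw [Real.div_rpow hc0.le ht.le, Real.rpow_neg ht.le, div_eq_mul_inv]
      _ ≤ levelLength c k ^ α := Real.rpow_le_rpow (by positivity)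
          (c_zero_div_tail_le_levelLength hc hs hk) hα0
  calc n * c 0 / 2 * (c k * tail c k ^ (-α)) = n * c k / 2 * (c 0 * tail c k ^ (-α)) := by ring
    _ ≤ maxLaw c n k * levelLength c k ^ α :=
        mul_le_mul (mul_le_maxLaw_of_tail_le hc hs hn hkn) hlevel (by positivity)
          (maxLaw_nonneg (fun i => (hc i).le) n k)

lemma div_le_tail_of_lt_tail_pred {ρ : ℝ} (hρ : ∀ k, tail c k ≤ ρ * tail c (k + 1)) {ε : ℝ}
    {K : ℕ} (hK : K ≠ 0) (hε : ε < tail c (K - 1)) : ε / ρ ≤ tail c K := by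
  have h := hρ (K - 1)
  rw [Nat.sub_add_cancel (Nat.one_le_iff_ne_zero.2 hK)] at h
  rw [div_le_iff₀ (by linarith [one_le_of_tail_le_mul_tail_succ hc hs.summable hρ])]
  linarith

lemma levelMoment_ge {ρ : ℝ} (hρ : ∀ k, tail c k ≤ ρ * tail c (k + 1)) (hn : 1 ≤ n) (hα0 : 0 ≤ α)
    (hα1 : α < 1) :
    ENNReal.ofReal (c 0 / (4 * ρ ^ 2) * n ^ α / (1 - α)) ≤ levelMoment c α n := by
  have hnR : (1 : ℝ) ≤ n := by exact_mod_cast hn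
  have hρ1 := one_le_of_tail_le_mul_tail_succ hc hs.summable hρ
  have hc0 := hc 0
  obtain ⟨K, hK, hlt⟩ := exists_tail_le_forall_lt (c := c) (ε := 1 / (2 * n)) (by positivity)
  have hK0 : K ≠ 0 := by
    rintro rfl
    rw [tail_zero_eq_one hs, le_div_iff₀ (by positivity)] at hK
    linarith
  have hKβ := natCast_rpow_div_le_rpow hn hα0 hα1.le hρ1
    (div_le_tail_of_lt_tail_pred hc hs hρ hK0 (hlt (K - 1) (by omega)))
  calc ENNReal.ofReal (c 0 / (4 * ρ ^ 2) * n ^ α / (1 - α))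
      ≤ ENNReal.ofReal (n * c 0 / 2) * ENNReal.ofReal (tail c K ^ (1 - α) / ((1 - α) * ρ)) := by
        rw [← ENNReal.ofReal_mul (by positivity)]
        refine ENNReal.ofReal_le_ofReal ?_
        calc c 0 / (4 * ρ ^ 2) * n ^ α / (1 - α)
            = n * c 0 / 2 * ((n : ℝ) ^ α / n / (2 * ρ) / ((1 - α) * ρ)) := by
              field_simp; ring
          _ ≤ n * c 0 / 2 * (tail c K ^ (1 - α) / ((1 - α) * ρ)) := by
              gcongr
    _ ≤ ENNReal.ofReal (n * c 0 / 2) * ∑' k, ENNReal.ofReal (c (k + K) * tail c (k + K) ^ (-α)) :=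
        mul_le_mul' le_rfl (ofReal_tail_rpow_div_le_tsum hc hs.summable hα0 hα1 hρ K)
    _ ≤ ∑' k, ENNReal.ofReal (maxLaw c n (k + K)) * ENNReal.ofReal (levelLength c (k + K) ^ α) := by
        rw [← ENNReal.tsum_mul_left]
        refine ENNReal.tsum_le_tsum fun k => ?_
        rw [← ENNReal.ofReal_mul (by positivity),
          ← ENNReal.ofReal_mul (maxLaw_nonneg (fun i => (hc i).le) _ _)]
        exact ENNReal.ofReal_le_ofReal (mul_rpow_neg_le_maxLaw_mul hc hs hn hα0 hα1.le (by omega)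
          ((tail_strictAnti hc hs.summable).antitone (Nat.le_add_left K k) |>.trans hK))
    _ ≤ levelMoment c α n := ENNReal.tsum_comp_le_tsum_of_injective (add_left_injective K) _

end LevelMoment

section Convolution

variable {G : Type*} [Group G]

-- `gconv` with values in `ℝ≥0∞`, where every sum converges.
noncomputable def econv (f g : G → ℝ≥0∞) : G → ℝ≥0∞ :=
  fun x => ∑' y, f y * g (y⁻¹ * x)

noncomputable def econvPow (f : G → ℝ≥0∞) : ℕ → G → ℝ≥0∞
  | 0 => fun x => if x = 1 then 1 else 0
  | n + 1 => econv f (econvPow f n)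

lemma tsum_econv (f g : G → ℝ≥0∞) : ∑' x, econv f g x = (∑' x, f x) * ∑' x, g x := by
  simp only [econv]
  rw [ENNReal.tsum_comm, ← ENNReal.tsum_mul_right]
  refine tsum_congr fun y => ?_
  rw [ENNReal.tsum_mul_left]
  exact congrArg _ ((Equiv.mulLeft y⁻¹).tsum_eq g)

lemma tsum_econvPow (f : G → ℝ≥0∞) (n : ℕ) : ∑' x, econvPow f n x = (∑' x, f x) ^ n := by
  induction n with
  | zero => simp [econvPow]
  | succ n ih => rw [econvPow, tsum_econv, ih, pow_succ']

lemma econvPow_ne_top {f : G → ℝ≥0∞} (hf : ∑' x, f x ≠ ∞) (n : ℕ) (x : G) : econvPow f n x ≠ ∞ :=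
  ne_top_of_le_ne_top (by rw [tsum_econvPow]; exact ENNReal.pow_ne_top hf) (ENNReal.le_tsum x)

lemma econvPow_one (f : G → ℝ≥0∞) : econvPow f 1 = f := by
  ext x
  simp only [econvPow, econv]
  rw [tsum_eq_single x fun y hy => by simp [inv_mul_eq_one, hy]]
  simp

lemma econv_tsum_mul (a b : ℕ → ℝ≥0∞) (f g : ℕ → G → ℝ≥0∞) (x : G) :
    econv (fun y => ∑' j, a j * f j y) (fun y => ∑' k, b k * g k y) x =
      ∑' j, ∑' k, a j * b k * econv (f j) (g k) x := by
  simp only [econv]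
  calc ∑' y, (∑' j, a j * f j y) * ∑' k, b k * g k (y⁻¹ * x)
      = ∑' y, ∑' j, ∑' k, a j * b k * (f j y * g k (y⁻¹ * x)) := by
        refine tsum_congr fun y => ?_
        rw [← ENNReal.tsum_mul_right]
        refine tsum_congr fun j => ?_
        rw [← ENNReal.tsum_mul_left]
        exact tsum_congr fun k => by ring
    _ = _ := ENNReal.tsum_comm.trans <| tsum_congr fun j =>
        ENNReal.tsum_comm.trans <| tsum_congr fun k => ENNReal.tsum_mul_left

lemma gconvPow_toReal {f : G → ℝ≥0∞} (hf : ∑' x, f x ≠ ∞) (n : ℕ) (x : G) :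
    gconvPow (fun y => (f y).toReal) n x = (econvPow f n x).toReal := by
  induction n generalizing x with
  | zero => simp only [gconvPow, econvPow]; split <;> simp
  | succ n ih =>
    simp only [gconvPow, econvPow, gconv, econv, ih]
    rw [ENNReal.tsum_toReal_eq fun y => ENNReal.mul_ne_top
      (ne_top_of_le_ne_top hf (ENNReal.le_tsum y)) (econvPow_ne_top hf n _)]
    simp only [ENNReal.toReal_mul]

end Convolution

section UniformDensity

variable {G : Type*} [Group G]

noncomputable def uniformDensity (K : Subgroup G) : G → ℝ≥0∞ :=
  (K : Set G).indicator fun _ => (Nat.card K : ℝ≥0∞)⁻¹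

lemma uniformDensity_toReal (K : Subgroup G) (x : G) :
    (uniformDensity K x).toReal = if x ∈ K then (Nat.card K : ℝ)⁻¹ else 0 := by
  simp only [uniformDensity, Set.indicator, SetLike.mem_coe]
  split <;> simp

lemma uniformDensity_ne_top (K : Subgroup G) [Finite K] (x : G) : uniformDensity K x ≠ ∞ := by
  by_cases hx : x ∈ K <;> simp [uniformDensity, hx, Nat.card_pos.ne']

lemma uniformDensity_mul_left {K : Subgroup G} {g : G} (hg : g ∈ K) (x : G) :
    uniformDensity K (g * x) = uniformDensity K x := by
  simp [uniformDensity, Set.indicator, K.mul_mem_cancel_left hg]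

lemma uniformDensity_mul_right {K : Subgroup G} {g : G} (hg : g ∈ K) (x : G) :
    uniformDensity K (x * g) = uniformDensity K x := by
  simp [uniformDensity, Set.indicator, K.mul_mem_cancel_right hg]

lemma tsum_uniformDensity (K : Subgroup G) [Finite K] : ∑' x, uniformDensity K x = 1 := by
  rw [uniformDensity, ← _root_.tsum_subtype, ENNReal.tsum_const, ENat.card_eq_coe_natCard]
  exact ENNReal.mul_inv_cancel (by simp [Nat.card_pos.ne']) (by simp)

lemma econv_uniformDensity_of_le {K L : Subgroup G} [Finite K] (hKL : K ≤ L) :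
    econv (uniformDensity K) (uniformDensity L) = uniformDensity L := by
  ext x
  have h : ∀ y, uniformDensity K y * uniformDensity L (y⁻¹ * x) =
      uniformDensity K y * uniformDensity L x := by
    intro y
    by_cases hy : y ∈ K
    · rw [uniformDensity_mul_left (L.inv_mem (hKL hy))]
    · simp [uniformDensity, hy]
  rw [econv, tsum_congr h, ENNReal.tsum_mul_right, tsum_uniformDensity, one_mul]

lemma econv_uniformDensity_of_ge {K L : Subgroup G} [Finite K] (hKL : K ≤ L) :
    econv (uniformDensity L) (uniformDensity K) = uniformDensity L := by
  ext x
  have h : ∀ z, uniformDensity L (x * z⁻¹) * uniformDensity K ((x * z⁻¹)⁻¹ * x) =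
      uniformDensity L x * uniformDensity K z := by
    intro z
    rw [mul_inv_rev, inv_inv, inv_mul_cancel_right]
    by_cases hz : z ∈ K
    · rw [uniformDensity_mul_right (L.inv_mem (hKL hz))]
    · simp [uniformDensity, hz]
  rw [econv, ← ((Equiv.inv G).trans (Equiv.mulLeft x)).tsum_eq]
  simp only [Equiv.trans_apply, Equiv.inv_apply, Equiv.coe_mulLeft]
  rw [tsum_congr h, ENNReal.tsum_mul_left, tsum_uniformDensity, mul_one]

lemma two_mul_card_le_of_lt {K L : Subgroup G} [Finite L] (h : K < L) :
    2 * Nat.card K ≤ Nat.card L := by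
  have : Finite K := Finite.of_injective _ (Subgroup.inclusion_injective h.le)
  obtain ⟨q, hq⟩ := Subgroup.card_dvd_of_le h.le
  have hlt : Nat.card K < Nat.card L :=
    lt_of_not_ge fun hge => h.ne (Subgroup.eq_of_le_of_card_ge h.le hge)
  have hq2 : 2 ≤ q := by
    by_contra! h
    interval_cases q <;> simp [hq] at hlt
  calc 2 * Nat.card K ≤ Nat.card K * q := by rw [mul_comm]; exact Nat.mul_le_mul_left _ hq2
    _ = Nat.card L := hq.symm

lemma indicator_uniformDensity_of_le {K L : Subgroup G} [Finite K] (hKL : K ≤ L) :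
    (K : Set G).indicator (uniformDensity L) =
      fun x => (Nat.card K : ℝ≥0∞) * (Nat.card L : ℝ≥0∞)⁻¹ * uniformDensity K x := by
  ext x
  by_cases hx : x ∈ K
  · simp only [uniformDensity, Set.indicator, SetLike.mem_coe, hx, hKL hx, if_true]
    rw [mul_comm, ← mul_assoc, ENNReal.inv_mul_cancel (by simp [Nat.card_pos.ne']) (by simp),
      one_mul]
  · simp [uniformDensity, hx]

-- `K` has index at least `2` in `L`, so at least half of `L` lies outside `K`.
lemma div_two_le_tsum_mul_uniformDensity {K L : Subgroup G} [Finite L] (hKL : K < L)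
    {f : G → ℝ≥0∞} {a : ℝ≥0∞} (hf : ∀ y ∈ L, y ∉ K → a ≤ f y) :
    a / 2 ≤ ∑' y, f y * uniformDensity L y := by
  have : Finite K := Finite.of_injective _ (Subgroup.inclusion_injective hKL.le)
  have hin : ∑' y, (K : Set G).indicator (uniformDensity L) y ≤ 2⁻¹ := by
    rw [indicator_uniformDensity_of_le hKL.le, ENNReal.tsum_mul_left, tsum_uniformDensity, mul_one,
      ENNReal.mul_inv_le_iff (by simp [Nat.card_pos.ne']) (by simp), ← ENNReal.div_eq_inv_mul,
      ENNReal.le_div_iff_mul_le (Or.inl two_ne_zero) (Or.inl ENNReal.ofNat_ne_top), mul_comm]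
    exact_mod_cast two_mul_card_le_of_lt hKL
  have hout : 2⁻¹ ≤ ∑' y, (K : Set G)ᶜ.indicator (uniformDensity L) y := by
    have h := tsum_uniformDensity L
    rw [← Set.indicator_self_add_compl (K : Set G) (uniformDensity L)] at h
    simp only [Pi.add_apply, ENNReal.tsum_add] at h
    rw [← ENNReal.one_sub_inv_two, tsub_le_iff_right, ← h, add_comm]
    gcongr
  calc a / 2 = a * 2⁻¹ := div_eq_mul_inv a 2
    _ ≤ a * ∑' y, (K : Set G)ᶜ.indicator (uniformDensity L) y := mul_le_mul' le_rfl hout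
    _ = ∑' y, a * (K : Set G)ᶜ.indicator (uniformDensity L) y := ENNReal.tsum_mul_left.symm
    _ ≤ ∑' y, f y * uniformDensity L y := by
        refine ENNReal.tsum_le_tsum fun y => ?_
        by_cases hyK : y ∈ K
        · simp [hyK]
        by_cases hyL : y ∈ L
        · simpa [hyK] using mul_le_mul' (hf y hyL hyK) le_rfl
        · simp [uniformDensity, hyL]

end UniformDensity

lemma tsum_tsum_mul_max (p q F : ℕ → ℝ≥0∞) :
    ∑' j, ∑' k, p j * q k * F (max j k) =
      ∑' m, (p m * ∑ k ∈ range m, q k + q m * ∑ j ∈ range (m + 1), p j) * F m := by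
  have hsplit : ∀ j k, p j * q k * F (max j k) =
      (range (k + 1) : Set ℕ).indicator p j * (q k * F k) +
        (range j : Set ℕ).indicator q k * (p j * F j) := by
    intro j k
    rcases le_or_gt j k with h | h
    · simp [Set.indicator, max_eq_right h, Nat.lt_succ_of_le h, not_lt.2 h]; ring
    · simp [Set.indicator, max_eq_left h.le, h, not_le.2 h]; ring
  simp_rw [hsplit, ENNReal.tsum_add]
  rw [ENNReal.tsum_comm (f := fun j k => (range (k + 1) : Set ℕ).indicator p j * (q k * F k)),
    ← ENNReal.tsum_add]
  refine tsum_congr fun m => ?_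
  rw [ENNReal.tsum_mul_right, ENNReal.tsum_mul_right, ← sum_eq_tsum_indicator,
    ← sum_eq_tsum_indicator]
  ring

section Mixture

variable {G : Type*} [Group G] {H : ℕ → Subgroup G} {c : ℕ → ℝ}

noncomputable def uniformMixture (H : ℕ → Subgroup G) (c : ℕ → ℝ) : G → ℝ≥0∞ :=
  fun x => ∑' k, ENNReal.ofReal (c k) * uniformDensity (H k) x

lemma tsum_uniformMixture [∀ k, Finite (H k)] (hc : ∀ k, 0 ≤ c k) (hs : Summable c) :
    ∑' x, uniformMixture H c x = ENNReal.ofReal (∑' k, c k) := by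
  simp only [uniformMixture]
  rw [ENNReal.tsum_comm, ENNReal.ofReal_tsum_of_nonneg hc hs]
  exact tsum_congr fun k => by rw [ENNReal.tsum_mul_left, tsum_uniformDensity, mul_one]

lemma tsum_uniformMixture_ne_top [∀ k, Finite (H k)] (hc : ∀ k, 0 ≤ c k) (hs : Summable c) :
    ∑' x, uniformMixture H c x ≠ ∞ := by
  rw [tsum_uniformMixture hc hs]
  exact ENNReal.ofReal_ne_top

lemma uniformMixture_toReal [∀ k, Finite (H k)] (hc : ∀ k, 0 ≤ c k) (x : G) :
    (uniformMixture H c x).toReal = ∑' k, c k * (uniformDensity (H k) x).toReal := by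
  have hne : ∀ k, ENNReal.ofReal (c k) * uniformDensity (H k) x ≠ ∞ :=
    fun k => ENNReal.mul_ne_top ENNReal.ofReal_ne_top (uniformDensity_ne_top _ x)
  rw [uniformMixture, ENNReal.tsum_toReal_eq hne]
  simp only [ENNReal.toReal_mul, ENNReal.toReal_ofReal (hc _)]

lemma econv_uniformDensity_max (hH : Monotone H) [∀ k, Finite (H k)] (j k : ℕ) :
    econv (uniformDensity (H j)) (uniformDensity (H k)) = uniformDensity (H (max j k)) := by
  rcases le_total j k with h | h
  · rw [max_eq_right h]; exact econv_uniformDensity_of_le (hH h)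
  · rw [max_eq_left h]; exact econv_uniformDensity_of_ge (hH h)

lemma econvPow_uniformMixture (hH : Monotone H) [∀ k, Finite (H k)] (hc : ∀ k, 0 ≤ c k) {n : ℕ}
    (hn : 1 ≤ n) :
    econvPow (uniformMixture H c) n =
      fun x => ∑' k, ENNReal.ofReal (maxLaw c n k) * uniformDensity (H k) x := by
  induction n, hn using Nat.le_induction with
  | base => simp only [econvPow_one, maxLaw_one]; rfl
  | succ n hn ih =>
    funext x
    rw [econvPow, ih]
    unfold uniformMixture
    rw [econv_tsum_mul]
    simp_rw [econv_uniformDensity_max hH]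
    rw [tsum_tsum_mul_max (fun j => ENNReal.ofReal (c j)) (fun k => ENNReal.ofReal (maxLaw c n k))
      (fun m => uniformDensity (H m) x)]
    refine tsum_congr fun m => ?_
    rw [ofReal_maxLaw_succ hc (by omega)]

end Mixture

section Level

variable {G : Type*} [Group G] {H : ℕ → Subgroup G}

noncomputable def level (hunion : ∀ x, ∃ k, x ∈ H k) (x : G) : ℕ := Nat.find (hunion x)

variable {hunion : ∀ x, ∃ k, x ∈ H k}

lemma mem_level (x : G) : x ∈ H (level hunion x) := Nat.find_spec (hunion x)

lemma level_le_of_mem {x : G} {k : ℕ} (hx : x ∈ H k) : level hunion x ≤ k := Nat.find_min' _ hx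

lemma notMem_of_lt_level {x : G} {k : ℕ} (hk : k < level hunion x) : x ∉ H k :=
  Nat.find_min (hunion x) hk

lemma level_eq_of_mem_of_notMem (hH : Monotone H) {x : G} {k : ℕ} (hx : x ∈ H (k + 1))
    (hx' : x ∉ H k) : level hunion x = k + 1 :=
  le_antisymm (level_le_of_mem hx)
    (Nat.succ_le_of_lt (lt_of_not_ge fun h => hx' (hH h (mem_level x))))

lemma tsum_level_mul_uniformDensity_le {φ : ℕ → ℝ≥0∞} (hφ : Monotone φ) (k : ℕ) [Finite (H k)] :
    ∑' y, φ (level hunion y) * uniformDensity (H k) y ≤ φ k :=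
  calc ∑' y, φ (level hunion y) * uniformDensity (H k) y ≤ ∑' y, φ k * uniformDensity (H k) y := by
        refine ENNReal.tsum_le_tsum fun y => ?_
        by_cases hy : y ∈ H k
        · exact mul_le_mul' (hφ (level_le_of_mem hy)) le_rfl
        · simp [uniformDensity, hy]
    _ = φ k := by rw [ENNReal.tsum_mul_left, tsum_uniformDensity, mul_one]

lemma div_two_le_tsum_level_mul_uniformDensity (hH : StrictMono H) [∀ k, Finite (H k)]
    (φ : ℕ → ℝ≥0∞) (k : ℕ) :
    φ k / 2 ≤ ∑' y, φ (level hunion y) * uniformDensity (H k) y := by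
  cases k with
  | zero =>
    calc φ 0 / 2 ≤ φ 0 := ENNReal.half_le_self
      _ = ∑' y, φ (level hunion y) * uniformDensity (H 0) y := by
        rw [← mul_one (φ 0), ← tsum_uniformDensity (H 0), ← ENNReal.tsum_mul_left]
        refine tsum_congr fun y => ?_
        by_cases hy : y ∈ H 0
        · rw [Nat.le_zero.1 (level_le_of_mem hy)]
        · simp [uniformDensity, hy]
  | succ k =>
    exact div_two_le_tsum_mul_uniformDensity (hH k.lt_succ_self) fun y hy hy' =>
      (level_eq_of_mem_of_notMem hH.monotone hy hy').symm ▸ le_rfl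

end Level

section MeanDisplacement

variable {G : Type*} [Group G] {H : ℕ → Subgroup G} {c : ℕ → ℝ} {α : ℝ} {n : ℕ}

-- `M_X(α, n)`, computed in `ℝ≥0∞`.
noncomputable def meanDisplacement (hunion : ∀ x, ∃ k, x ∈ H k) (c : ℕ → ℝ) (α : ℝ) (n : ℕ) :
    ℝ≥0∞ :=
  ∑' y, ENNReal.ofReal (levelLength c (level hunion y) ^ α) * econvPow (uniformMixture H c) n y

variable {hunion : ∀ x, ∃ k, x ∈ H k}

lemma meanDisplacement_eq (hH : Monotone H) [∀ k, Finite (H k)] (hc : ∀ k, 0 ≤ c k)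
    (hn : 1 ≤ n) :
    meanDisplacement hunion c α n = ∑' k, ENNReal.ofReal (maxLaw c n k) *
      ∑' y, ENNReal.ofReal (levelLength c (level hunion y) ^ α) * uniformDensity (H k) y := by
  rw [meanDisplacement, econvPow_uniformMixture hH hc hn]
  simp_rw [← ENNReal.tsum_mul_left]
  rw [ENNReal.tsum_comm]
  exact tsum_congr fun k => tsum_congr fun y => by ring

lemma meanDisplacement_le_levelMoment (hH : Monotone H) [∀ k, Finite (H k)] (hc : ∀ k, 0 < c k)
    (hs : HasSum c 1) (hα : 0 ≤ α) (hn : 1 ≤ n) :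
    meanDisplacement hunion c α n ≤ levelMoment c α n := by
  have hφ : Monotone fun k => ENNReal.ofReal (levelLength c k ^ α) := fun j k hjk =>
    ENNReal.ofReal_le_ofReal (Real.rpow_le_rpow (levelLength_nonneg hc hs j)
      (monotone_levelLength hc hs hjk) hα)
  rw [meanDisplacement_eq hH (fun k => (hc k).le) hn]
  exact ENNReal.tsum_le_tsum fun k => mul_le_mul' le_rfl (tsum_level_mul_uniformDensity_le hφ k)

lemma levelMoment_div_two_le_meanDisplacement (hH : StrictMono H) [∀ k, Finite (H k)]
    (hc : ∀ k, 0 ≤ c k) (hn : 1 ≤ n) :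
    levelMoment c α n / 2 ≤ meanDisplacement hunion c α n := by
  rw [meanDisplacement_eq hH.monotone hc hn, levelMoment, ENNReal.div_eq_inv_mul,
    ← ENNReal.tsum_mul_left]
  refine ENNReal.tsum_le_tsum fun k => ?_
  rw [mul_left_comm, ← ENNReal.div_eq_inv_mul]
  exact mul_le_mul' le_rfl (div_two_le_tsum_level_mul_uniformDensity hH
    (fun k => ENNReal.ofReal (levelLength c k ^ α)) k)

lemma meanDisplacement_lt_top_iff (hH : StrictMono H) [∀ k, Finite (H k)] (hc : ∀ k, 0 < c k)
    (hs : HasSum c 1) (hα : 0 ≤ α) (hn : 1 ≤ n) :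
    meanDisplacement hunion c α n < ∞ ↔ α < 1 := by
  refine ⟨fun hlt => ?_, fun hα1 => ?_⟩
  · by_contra! hα1
    have h := levelMoment_div_two_le_meanDisplacement (hunion := hunion) (α := α) hH
      (fun k => (hc k).le) hn
    rw [levelMoment_eq_top hc hs hn hα1, ENNReal.top_div_of_ne_top ENNReal.ofNat_ne_top] at h
    exact hlt.ne (top_le_iff.1 h)
  · exact (meanDisplacement_le_levelMoment hH.monotone hc hs hα hn).trans_lt
      ((levelMoment_le hc hs hn hα hα1).trans_lt ENNReal.ofReal_lt_top)

lemma meanDisplacement_le (hH : Monotone H) [∀ k, Finite (H k)] (hc : ∀ k, 0 < c k)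
    (hs : HasSum c 1) (hn : 1 ≤ n) (hα0 : 0 ≤ α) (hα1 : α < 1) :
    meanDisplacement hunion c α n ≤ ENNReal.ofReal (2 * n ^ α / (1 - α)) :=
  (meanDisplacement_le_levelMoment hH hc hs hα0 hn).trans (levelMoment_le hc hs hn hα0 hα1)

lemma le_meanDisplacement (hH : StrictMono H) [∀ k, Finite (H k)] (hc : ∀ k, 0 < c k)
    (hs : HasSum c 1) {ρ : ℝ} (hρ : ∀ k, tail c k ≤ ρ * tail c (k + 1)) (hn : 1 ≤ n)
    (hα0 : 0 ≤ α) (hα1 : α < 1) :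
    ENNReal.ofReal (c 0 / (8 * ρ ^ 2) * n ^ α / (1 - α)) ≤ meanDisplacement hunion c α n := by
  refine le_trans ?_ (levelMoment_div_two_le_meanDisplacement hH (fun k => (hc k).le) hn)
  rw [show c 0 / (8 * ρ ^ 2) * n ^ α / (1 - α) = c 0 / (4 * ρ ^ 2) * n ^ α / (1 - α) / 2 by ring,
    ENNReal.ofReal_div_of_pos two_pos, ENNReal.ofReal_ofNat]
  exact ENNReal.div_le_div_right (levelMoment_ge hc hs hρ hn hα0 hα1) 2

lemma levelLength_rpow_mul_gconvPow [∀ k, Finite (H k)] (hc : ∀ k, 0 < c k) (hs : HasSum c 1)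
    (y : G) :
    levelLength c (level hunion y) ^ α * gconvPow (fun x => (uniformMixture H c x).toReal) n y =
      (ENNReal.ofReal (levelLength c (level hunion y) ^ α) *
        econvPow (uniformMixture H c) n y).toReal := by
  rw [gconvPow_toReal (tsum_uniformMixture_ne_top (fun k => (hc k).le) hs.summable),
    ENNReal.toReal_mul,
    ENNReal.toReal_ofReal (Real.rpow_nonneg (levelLength_nonneg hc hs _) _)]

lemma ofReal_levelLength_rpow_mul_econvPow_ne_top [∀ k, Finite (H k)] (hc : ∀ k, 0 ≤ c k)
    (hs : Summable c) (y : G) :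
    ENNReal.ofReal (levelLength c (level hunion y) ^ α) * econvPow (uniformMixture H c) n y ≠ ∞ :=
  ENNReal.mul_ne_top ENNReal.ofReal_ne_top (econvPow_ne_top (tsum_uniformMixture_ne_top hc hs) n y)

lemma summable_levelLength_rpow_mul_gconvPow_iff [∀ k, Finite (H k)] (hc : ∀ k, 0 < c k)
    (hs : HasSum c 1) :
    Summable (fun y => levelLength c (level hunion y) ^ α *
      gconvPow (fun x => (uniformMixture H c x).toReal) n y) ↔
      meanDisplacement hunion c α n ≠ ∞ := by
  simp_rw [levelLength_rpow_mul_gconvPow hc hs]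
  exact ENNReal.summable_toReal_iff
    (ofReal_levelLength_rpow_mul_econvPow_ne_top (fun k => (hc k).le) hs.summable)

lemma tsum_levelLength_rpow_mul_gconvPow [∀ k, Finite (H k)] (hc : ∀ k, 0 < c k)
    (hs : HasSum c 1) :
    ∑' y, levelLength c (level hunion y) ^ α *
      gconvPow (fun x => (uniformMixture H c x).toReal) n y =
      (meanDisplacement hunion c α n).toReal := by
  simp_rw [levelLength_rpow_mul_gconvPow hc hs]
  exact (ENNReal.tsum_toReal_eq
    (ofReal_levelLength_rpow_mul_econvPow_ne_top (fun k => (hc k).le) hs.summable)).symm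

end MeanDisplacement

/-- Proposition 8.3 (rate of escape): with `|x|_σ = 1/σ(n-1) - 1` where `n` is
minimal with `x ∈ G_n` (and `σ(-1) = 1`), the mean `α`-displacement
`M_X(α,n) = ∑_y |y|_σ^α μ^{*n}(y)` is finite iff `α < 1`, and under Condition
(A) it satisfies `M_X(α,n) ≍ n^α/(1-α)` uniformly in `n ≥ 1`, `0 < α < 1`. -/
theorem stmt_18 {G : Type*} [Group G]
    (H : ℕ → Subgroup G) (hfin : ∀ k, (H k : Set G).Finite)
    (hlt : ∀ k, H k < H (k + 1)) (hunion : ∀ x : G, ∃ k, x ∈ H k)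
    (c : ℕ → ℝ) (hc : ∀ k, 0 < c k) (hcsum : ∑' k : ℕ, c k = 1)
    (m : ℕ → G → ℝ)
    (hm : ∀ (k : ℕ) (x : G),
      m k x = if x ∈ H k then ((Nat.card (H k) : ℝ))⁻¹ else 0)
    (μ : G → ℝ) (hμ : ∀ x : G, μ x = ∑' k : ℕ, c k * m k x)
    (σ : ℕ → ℝ) (hσ : ∀ k, σ k = ∑' i : ℕ, c (k + 1 + i))
    (absσ : G → ℝ)
    (habs : ∀ (x : G) (n : ℕ), x ∈ H n → (∀ j < n, x ∉ H j) →
      absσ x = if n = 0 then 0 else (σ (n - 1))⁻¹ - 1) :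
    (∀ n : ℕ, 1 ≤ n → ∀ α : ℝ, 0 < α →
      (Summable (fun y : G => absσ y ^ α * gconvPow μ n y) ↔ α < 1)) ∧
    ((∃ lam > (0 : ℝ), ∀ k, c k ≤ lam * σ k) →
      ∃ a₁ > (0 : ℝ), ∃ a₂ > (0 : ℝ), ∀ n : ℕ, 1 ≤ n → ∀ α : ℝ, 0 < α → α < 1 →
        a₁ * (n : ℝ) ^ α / (1 - α) ≤ ∑' y : G, absσ y ^ α * gconvPow μ n y ∧
        ∑' y : G, absσ y ^ α * gconvPow μ n y ≤ a₂ * (n : ℝ) ^ α / (1 - α)) := by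
  have : ∀ k, Finite (H k) := fun k => (hfin k).to_subtype
  have hH : StrictMono H := strictMono_nat_of_lt_succ hlt
  have hs : HasSum c 1 := by
    by_cases h : Summable c
    · exact hcsum ▸ h.hasSum
    · rw [tsum_eq_zero_of_not_summable h] at hcsum
      exact absurd hcsum zero_ne_one
  have htail : ∀ k, σ k = tail c (k + 1) := fun k => by simp only [hσ, tail, add_comm]
  have habs' : absσ = fun y => levelLength c (level hunion y) := funext fun y => by
    rw [habs y _ (mem_level (hunion := hunion) y) fun j hj => notMem_of_lt_level hj]
    cases level hunion y with
    | zero => rw [if_pos rfl, levelLength_zero hs]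
    | succ k => rw [if_neg k.succ_ne_zero, Nat.add_sub_cancel, htail, levelLength]
  have hμ' : μ = fun x => (uniformMixture H c x).toReal := funext fun x => by
    simp only [hμ, uniformMixture_toReal (fun k => (hc k).le), hm, uniformDensity_toReal]
  subst habs' hμ'
  refine ⟨fun n hn α hα => ?_, fun ⟨lam, hlam, hA⟩ => ?_⟩
  · rw [summable_levelLength_rpow_mul_gconvPow_iff hc hs, ← lt_top_iff_ne_top]
    exact meanDisplacement_lt_top_iff hH hc hs hα.le hn
  have hρ : ∀ k, tail c k ≤ (1 + lam) * tail c (k + 1) := fun k => by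
    linarith [htail k ▸ hA k, tail_eq_add_tail_succ hs.summable k]
  refine ⟨c 0 / (8 * (1 + lam) ^ 2), by have := hc 0; positivity, 2, two_pos,
    fun n hn α hα0 hα1 => ?_⟩
  rw [tsum_levelLength_rpow_mul_gconvPow hc hs]
  have hfin' := ((meanDisplacement_lt_top_iff (hunion := hunion) hH hc hs hα0.le hn).2 hα1).ne
  exact ⟨(ENNReal.ofReal_le_iff_le_toReal hfin').1 (le_meanDisplacement hH hc hs hρ hn hα0.le hα1),
    ENNReal.toReal_le_of_le_ofReal (by positivity)
      (meanDisplacement_le hH.monotone hc hs hn hα0.le hα1)⟩
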